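/- arXiv:2605.09113 — 3 statements merged into one kernel-verified Lean document; each statement's English description precedes it below -/
import Mathlib

section
/- Let G be a finite simple graph with vertex set V and edge set E(G), and let p : V → ℝ≥0 be vertex weights with W = Σ_{v∈V} p(v) > 0. Let B = Σ_{{u,v}∈E(G)} p(u)p(v) be the total edge weight, and let B' be any real number with B' ≥ B, B' ≥ (W/2)·max_{v∈V} p(v), and B' > 0. Then G contains an independent set I with |I| ≥ W² / (4B'). -/
/-!
Derandomized deletion method. For `x ∈ [0,1]^V`, keeping each vertex `v` independently with
probability `x v` and then deleting one endpoint of every surviving edge leaves an independent set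
of expected size at least `∑ x v - ∑_{uv ∈ E} x u x v`. This quantity is affine in each coordinate,
so it can be rounded one coordinate at a time to a `0/1` vector without decreasing it; for the
indicator of a set `S` it is `|S|` minus the number of edges inside `S`. Taking `x = z p` with
`z = W / (2B')` gives the value `z W - z² B ≥ W² / (4B')`.
-/

open Finset Function

namespace SimpleGraph

variable {V : Type*} [Fintype V] (G : SimpleGraph V) [DecidableRel G.Adj]

def edgeProd (x : V → ℝ) : Sym2 V → ℝ :=
  Sym2.lift ⟨fun u v => x u * x v, fun u v => mul_comm (x u) (x v)⟩

def deletionGain (x : V → ℝ) : ℝ :=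
  ∑ v, x v - ∑ e ∈ G.edgeFinset, edgeProd x e

omit [Fintype V] in
@[simp]
lemma edgeProd_mk (x : V → ℝ) (u v : V) : edgeProd x s(u, v) = x u * x v := rfl

lemma deletionGain_const_mul (c : ℝ) (x : V → ℝ) :
    G.deletionGain (fun v => c * x v)
      = c * ∑ v, x v - c ^ 2 * ∑ e ∈ G.edgeFinset, edgeProd x e := by
  have hedge : ∀ e : Sym2 V, edgeProd (fun v => c * x v) e = c ^ 2 * edgeProd x e := by
    intro e
    induction e using Sym2.ind with
    | _ u v => simp only [edgeProd_mk]; ring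
  simp only [deletionGain, hedge, mul_sum]

variable [DecidableEq V]

omit [Fintype V] in
lemma edgeProd_update {e : Sym2 V} (he : ¬ e.IsDiag) (x : V → ℝ) (a : V) (t : ℝ) :
    edgeProd (update x a t) e
      = t * edgeProd (update x a 1) e + (1 - t) * edgeProd (update x a 0) e := by
  induction e using Sym2.ind with
  | _ u v =>
    rw [Sym2.mk_isDiag_iff] at he
    simp only [edgeProd_mk]
    by_cases hu : u = a <;> by_cases hv : v = a
    · exact absurd (hu.trans hv.symm) he
    · subst hu; simp only [update_self, update_of_ne hv]; ring
    · subst hv; simp only [update_self, update_of_ne hu]; ring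
    · simp only [update_of_ne hu, update_of_ne hv]; ring

lemma deletionGain_update (x : V → ℝ) (a : V) (t : ℝ) :
    G.deletionGain (update x a t)
      = t * G.deletionGain (update x a 1) + (1 - t) * G.deletionGain (update x a 0) := by
  have hvert : ∀ v, update x a t v = t * update x a 1 v + (1 - t) * update x a 0 v := by
    intro v
    rcases eq_or_ne v a with rfl | h
    · simp
    · simp only [update_of_ne h]; ring
  have hedge : ∀ e ∈ G.edgeFinset, edgeProd (update x a t) e
      = t * edgeProd (update x a 1) e + (1 - t) * edgeProd (update x a 0) e := fun e he =>
    edgeProd_update (G.not_isDiag_of_mem_edgeSet (mem_edgeFinset.mp he)) x a t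
  simp only [deletionGain, sum_congr rfl fun v _ => hvert v, sum_congr rfl hedge,
    sum_add_distrib, ← mul_sum]
  ring

lemma exists_deletionGain_le_update (x : V → ℝ) {a : V} (ha : x a ∈ Set.Icc (0 : ℝ) 1) :
    ∃ c : ℝ, (c = 0 ∨ c = 1) ∧ G.deletionGain x ≤ G.deletionGain (update x a c) := by
  have hconvex := G.deletionGain_update x a (x a)
  rw [update_eq_self] at hconvex
  obtain ⟨h0, h1⟩ := ha
  rcases le_total (G.deletionGain (update x a 0)) (G.deletionGain (update x a 1)) with h | h
  · exact ⟨1, .inr rfl, by nlinarith⟩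
  · exact ⟨0, .inl rfl, by nlinarith⟩

lemma exists_binary_on_deletionGain_le (x : V → ℝ) (hx : ∀ v, x v ∈ Set.Icc (0 : ℝ) 1)
    (T : Finset V) :
    ∃ y : V → ℝ, (∀ v, y v ∈ Set.Icc (0 : ℝ) 1) ∧ (∀ v ∈ T, y v = 0 ∨ y v = 1) ∧
      G.deletionGain x ≤ G.deletionGain y := by
  induction T using Finset.induction_on with
  | empty => exact ⟨x, hx, by simp, le_rfl⟩
  | @insert a T ha ih =>
    obtain ⟨y, hy, hyT, hxy⟩ := ih
    obtain ⟨c, hc, hyc⟩ := G.exists_deletionGain_le_update y (hy a)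
    have hcIcc : c ∈ Set.Icc (0 : ℝ) 1 := by rcases hc with rfl | rfl <;> simp
    refine ⟨update y a c, fun v => ?_, fun v hv => ?_, hxy.trans hyc⟩
    · rcases eq_or_ne v a with rfl | h
      · simpa using hcIcc
      · simpa [update_of_ne h] using hy v
    · rcases mem_insert.mp hv with rfl | hvT
      · simpa using hc
      · simpa [update_of_ne (ne_of_mem_of_not_mem hvT ha)] using hyT v hvT

lemma exists_deletionGain_le_indicator (x : V → ℝ) (hx : ∀ v, x v ∈ Set.Icc (0 : ℝ) 1) :
    ∃ S : Finset V, G.deletionGain x ≤ G.deletionGain fun v => if v ∈ S then 1 else 0 := by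
  obtain ⟨y, -, hy, hxy⟩ := G.exists_binary_on_deletionGain_le x hx univ
  refine ⟨({v | y v = 1} : Finset V), hxy.trans_eq (congrArg _ (funext fun v => ?_))⟩
  rcases hy v (mem_univ v) with h | h <;> simp [h]

lemma deletionGain_indicator (S : Finset V) :
    G.deletionGain (fun v => if v ∈ S then 1 else 0)
      = #S - #{e ∈ G.edgeFinset | e ∈ S.sym2} := by
  have hedge : ∀ e : Sym2 V,
      edgeProd (fun v => if v ∈ S then (1 : ℝ) else 0) e = if e ∈ S.sym2 then 1 else 0 := by
    intro e
    induction e using Sym2.ind with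
    | _ u v => by_cases hu : u ∈ S <;> by_cases hv : v ∈ S <;> simp [hu, hv]
  simp only [deletionGain, hedge, sum_boole, filter_mem_eq_inter, univ_inter]

lemma exists_isIndepSet_card_sub_le (S : Finset V) :
    ∃ I : Finset V, G.IsIndepSet I ∧ (#S : ℝ) - #{e ∈ G.edgeFinset | e ∈ S.sym2} ≤ #I := by
  set inner := {e ∈ G.edgeFinset | e ∈ S.sym2}
  refine ⟨S \ inner.image fun e => e.out.1, fun u hu v hv _ hadj => ?_, ?_⟩
  · simp only [coe_sdiff, Set.mem_sdiff, mem_coe, mem_image, not_exists, not_and] at hu hv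
    have hmem : s(u, v) ∈ inner := by simp [inner, hadj, hu.1, hv.1]
    rcases Sym2.mem_iff.mp (Sym2.out_fst_mem s(u, v)) with h | h
    · exact hu.2 _ hmem h
    · exact hv.2 _ hmem h
  · have hcard : #S ≤ #(S \ inner.image fun e => e.out.1) + #inner :=
      card_le_card_sdiff_add_card.trans (Nat.add_le_add_left card_image_le _)
    rw [sub_le_iff_le_add]
    exact_mod_cast hcard

lemma exists_isIndepSet_deletionGain_le (x : V → ℝ)
    (hx : ∀ v, x v ∈ Set.Icc (0 : ℝ) 1) :
    ∃ I : Finset V, G.IsIndepSet I ∧ G.deletionGain x ≤ #I := by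
  obtain ⟨S, hxS⟩ := G.exists_deletionGain_le_indicator x hx
  obtain ⟨I, hI, hSI⟩ := G.exists_isIndepSet_card_sub_le S
  exact ⟨I, hI, by rw [deletionGain_indicator] at hxS; linarith⟩

end SimpleGraph

theorem stmt_7_general {V : Type*} [Fintype V] [DecidableEq V]
    (G : SimpleGraph V) [DecidableRel G.Adj]
    (p : V → ℝ) (hp : ∀ v, 0 ≤ p v)
    (W : ℝ) (hW : W = ∑ v, p v)
    (B : ℝ)
    (hB : B = ∑ e ∈ G.edgeFinset,
      Sym2.lift ⟨fun u v => p u * p v, fun u v => mul_comm (p u) (p v)⟩ e)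
    (B' : ℝ) (hB'B : B ≤ B') (hB'max : ∀ v, (W / 2) * p v ≤ B') (hB'pos : 0 < B') :
    ∃ I : Finset V, (∀ u ∈ I, ∀ v ∈ I, ¬ G.Adj u v) ∧
      W ^ 2 / (4 * B') ≤ (I.card : ℝ) := by
  set z := W / (2 * B') with hz_def
  have hz : 0 ≤ z := div_nonneg (hW ▸ sum_nonneg fun v _ => hp v) (by positivity)
  have hx : ∀ v, z * p v ∈ Set.Icc (0 : ℝ) 1 := fun v =>
    ⟨mul_nonneg hz (hp v), by
      rw [div_mul_eq_mul_div, div_le_one (by positivity)]; linarith [hB'max v]⟩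
  have hgain : G.deletionGain (fun v => z * p v) = z * W - z ^ 2 * B := by
    rw [G.deletionGain_const_mul, hW, hB]
    rfl
  obtain ⟨I, hI, hxI⟩ := G.exists_isIndepSet_deletionGain_le _ hx
  refine ⟨I, fun u hu v hv hadj => hI hu hv hadj.ne hadj, ?_⟩
  calc W ^ 2 / (4 * B') = z * W - z ^ 2 * B' := by rw [hz_def]; field_simp; ring
    _ ≤ z * W - z ^ 2 * B := by nlinarith
    _ ≤ #I := hgain ▸ hxI

/-- **weighted probabilistic Turán.** Let `G` be a finite simple graph on
`V` with vertex weights `p : V → ℝ≥0` of total weight `W = ∑ p v > 0`.  Let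
`B = ∑_{{u,v}∈E(G)} p u · p v` be the total edge weight and `B'` any real with
`B' ≥ B`, `B' ≥ (W/2)·max_v p v`, `B' > 0`.  Then `G` contains an independent set `I`
with `|I| ≥ W² / (4B')`. -/
theorem stmt_7 {V : Type*} [Fintype V] [DecidableEq V]
    (G : SimpleGraph V) [DecidableRel G.Adj]
    (p : V → ℝ) (hp : ∀ v, 0 ≤ p v)
    (W : ℝ) (hW : W = ∑ v, p v) (hWpos : 0 < W)
    (B : ℝ)
    (hB : B = ∑ e ∈ G.edgeFinset,
      Sym2.lift ⟨fun u v => p u * p v, fun u v => mul_comm (p u) (p v)⟩ e)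
    (B' : ℝ) (hB'B : B ≤ B') (hB'max : ∀ v, (W / 2) * p v ≤ B') (hB'pos : 0 < B') :
    ∃ I : Finset V, (∀ u ∈ I, ∀ v ∈ I, ¬ G.Adj u v) ∧
      W ^ 2 / (4 * B') ≤ (I.card : ℝ) :=
  stmt_7_general G p hp W hW B hB B' hB'B hB'max hB'pos
end

section
/- Let Σ be a finite alphabet, n a positive integer, and C ⊆ Σⁿ a nonempty finite set of words with weights p : C → ℝ≥0 and total weight W = Σ_{c∈C} p(c) > 0. Fix a distance threshold d (a nonnegative real). Let B = Σ p(c)p(c') over all unordered pairs {c,c'} of distinct words of C with Hamming distance d_H(c, c') < d, and let B' be any real with B' ≥ B, B' ≥ (W/2)·max_{c∈C} p(c), and B' > 0. Then there exists a subcode C' ⊆ C with |C'| ≥ W² / (4B') such that every pair of distinct codewords in C' has Hamming distance at least d. -/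
lemma caroWei {α : Type*} [DecidableEq α] (p : α → ℝ)
    (r : α → α → Prop) [DecidableRel r] (hsym : ∀ a b, r a b → r b a) :
    ∀ (V : Finset α), (∀ v ∈ V, 0 ≤ p v) →
    ∃ S ⊆ V, ((∑ v ∈ V, p v)^2 ≤ (S.card : ℝ) *
        (∑ u ∈ V, p u * ∑ x ∈ V.filter (fun x => x = u ∨ r x u), p x)) ∧
      ∀ a ∈ S, ∀ b ∈ S, a ≠ b → ¬ r a b := by
  intro V
  induction V using Finset.strongInduction with
  | _ V ih =>
    intro hp
    rcases V.eq_empty_or_nonempty with hV | hV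
    · subst hV
      exact ⟨∅, by simp⟩
    · obtain ⟨v, hv, hmin⟩ := V.exists_min_image
        (fun u => ∑ x ∈ V.filter (fun x => x = u ∨ r x u), p x) hV
      set N : Finset α := V.filter (fun x => x = v ∨ r x v) with hN
      have hvN : v ∈ N := by simp [hN, hv]
      have hNV : N ⊆ V := Finset.filter_subset _ _
      set V' : Finset α := V \ N with hV'
      have hV'ss : V' ⊂ V := by
        refine Finset.ssubset_iff_of_subset (Finset.sdiff_subset) |>.2 ⟨v, hv, ?_⟩
        simp [hV', hvN]
      have hvV' : v ∉ V' := by simp [hV', hvN]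
      have hp' : ∀ u ∈ V', 0 ≤ p u := fun u hu => hp u (Finset.sdiff_subset hu)
      obtain ⟨S', hS'V', hS'card, hS'ind⟩ := ih V' hV'ss hp'
      refine ⟨insert v S', ?_, ?_, ?_⟩
      · intro x hx
        rcases Finset.mem_insert.1 hx with rfl | hx
        · exact hv
        · exact Finset.sdiff_subset (hS'V' hx)
      · -- the counting bound
        have hvS' : v ∉ S' := fun h => hvV' (hS'V' h)
        rw [Finset.card_insert_of_notMem hvS']
        set a : ℝ := ∑ x ∈ N, p x with ha
        set W' : ℝ := ∑ x ∈ V', p x with hW'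
        have hsplit : ∑ x ∈ V, p x = W' + a := by
          rw [hW', ha, hV']
          exact (Finset.sum_sdiff hNV).symm
        have ha0 : 0 ≤ a := Finset.sum_nonneg (fun x hx => hp x (hNV hx))
        have hW'0 : 0 ≤ W' := Finset.sum_nonneg hp'
        set D : ℝ := ∑ u ∈ V, p u * ∑ x ∈ V.filter (fun x => x = u ∨ r x u), p x with hD
        set D' : ℝ := ∑ u ∈ V', p u * ∑ x ∈ V'.filter (fun x => x = u ∨ r x u), p x with hD'
        have hD'0 : 0 ≤ D' := by
          refine Finset.sum_nonneg (fun u hu => ?_)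
          exact mul_nonneg (hp' u hu) (Finset.sum_nonneg fun x hx => hp' x (Finset.mem_filter.1 hx).1)
        have hDD' : D' + a * a ≤ D := by
          have h1 : D = (∑ u ∈ V', p u * ∑ x ∈ V.filter (fun x => x = u ∨ r x u), p x)
              + ∑ u ∈ N, p u * ∑ x ∈ V.filter (fun x => x = u ∨ r x u), p x := by
            rw [hD, hV']
            exact (Finset.sum_sdiff hNV).symm
          have h2 : D' ≤ ∑ u ∈ V', p u * ∑ x ∈ V.filter (fun x => x = u ∨ r x u), p x := by
            refine Finset.sum_le_sum (fun u hu => ?_)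
            refine mul_le_mul_of_nonneg_left ?_ (hp' u hu)
            refine Finset.sum_le_sum_of_subset_of_nonneg
              (Finset.filter_subset_filter _ Finset.sdiff_subset) (fun x hx _ => hp x (Finset.mem_filter.1 hx).1)
          have h3 : a * a ≤ ∑ u ∈ N, p u * ∑ x ∈ V.filter (fun x => x = u ∨ r x u), p x := by
            have : ∀ u ∈ N, p u * a ≤ p u * ∑ x ∈ V.filter (fun x => x = u ∨ r x u), p x := by
              intro u hu
              refine mul_le_mul_of_nonneg_left ?_ (hp u (hNV hu))
              have := hmin u (hNV hu)
              simpa [ha, hN] using this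
            calc a * a = ∑ u ∈ N, p u * a := by rw [← Finset.sum_mul]
              _ ≤ _ := Finset.sum_le_sum this
          linarith
        rw [hsplit]
        have hk0 : (0:ℝ) ≤ (S'.card : ℝ) := Nat.cast_nonneg _
        push_cast
        by_cases hS : S'.card = 0
        · have hW'eq : W' = 0 := by
            rw [hS] at hS'card
            push_cast at hS'card
            nlinarith [sq_nonneg W']
          rw [hS, hW'eq]
          push_cast
          nlinarith [hDD', hD'0]
        · have hkpos : (0:ℝ) < (S'.card : ℝ) :=
            Nat.cast_pos.2 (Nat.pos_of_ne_zero hS)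
          have key : (S'.card:ℝ) * (W'+a)^2 ≤ (S'.card:ℝ) * (((S'.card:ℝ)+1) * D) := by
            nlinarith [sq_nonneg (W' - (S'.card:ℝ)*a),
              mul_le_mul_of_nonneg_left hS'card (by linarith : (0:ℝ) ≤ (S'.card:ℝ)+1),
              mul_le_mul_of_nonneg_left hDD' (mul_nonneg hk0 (by linarith : (0:ℝ) ≤ (S'.card:ℝ)+1))]
          linarith [le_of_mul_le_mul_left key hkpos]
      · -- independence
        have hnotadj : ∀ u ∈ S', ¬ r u v := by
          intro u hu hr
          have huV' := hS'V' hu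
          have hmem : u ∈ N := Finset.mem_filter.2 ⟨Finset.sdiff_subset huV', Or.inr hr⟩
          exact (Finset.mem_sdiff.1 huV').2 hmem
        intro x hx y hy hxy hr
        rcases Finset.mem_insert.1 hx with hx' | hx' <;> rcases Finset.mem_insert.1 hy with hy' | hy'
        · exact hxy (hx'.trans hy'.symm)
        · subst hx'; exact hnotadj y hy' (hsym _ _ hr)
        · subst hy'; exact hnotadj x hx' hr
        · exact hS'ind x hx' y hy' hxy hr

/-- **finite-blocklength expurgation.** Let `𝒜` be a finite alphabet,
`n` a positive integer, and `C ⊆ 𝒜ⁿ` a nonempty finite set of words with weights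
`p : C → ℝ≥0` and total weight `W = ∑_{c∈C} p c > 0`.  Fix a distance threshold `d ≥ 0`.
Let `B = ∑ p c · p c'` over unordered pairs `{c,c'}` of distinct words of `C` with
Hamming distance `< d` (here written as half the sum over ordered pairs), and let `B'`
satisfy `B' ≥ B`, `B' ≥ (W/2)·max_{c∈C} p c`, `B' > 0`.  Then there exists a subcode
`C' ⊆ C` with `|C'| ≥ W²/(4B')` in which every pair of distinct codewords has Hamming
distance at least `d`. -/
theorem stmt_8 {𝒜 : Type*} [Fintype 𝒜] [DecidableEq 𝒜]
    (n : ℕ) (hn : 0 < n)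
    (C : Finset (Fin n → 𝒜)) (hC : C.Nonempty)
    (p : (Fin n → 𝒜) → ℝ) (hp : ∀ c ∈ C, 0 ≤ p c)
    (W : ℝ) (hW : W = ∑ c ∈ C, p c) (hWpos : 0 < W)
    (d : ℝ) (hd : 0 ≤ d)
    (B : ℝ)
    (hB : B = (∑ c ∈ C, ∑ c' ∈ C,
      if c ≠ c' ∧ (hammingDist c c' : ℝ) < d then p c * p c' else 0) / 2)
    (B' : ℝ) (hB'B : B ≤ B') (hB'max : ∀ c ∈ C, (W / 2) * p c ≤ B') (hB'pos : 0 < B') :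
    ∃ C' ⊆ C, (W ^ 2 / (4 * B') ≤ (C'.card : ℝ)) ∧
      ∀ c ∈ C', ∀ c' ∈ C', c ≠ c' → d ≤ (hammingDist c c' : ℝ) := by
  classical
  set r : (Fin n → 𝒜) → (Fin n → 𝒜) → Prop :=
    fun c c' => c ≠ c' ∧ (hammingDist c c' : ℝ) < d with hr
  have hsym : ∀ a b, r a b → r b a := by
    intro a b ⟨h1, h2⟩
    exact ⟨h1.symm, by rwa [hammingDist_comm]⟩
  obtain ⟨S, hSC, hScard, hSind⟩ := caroWei p r hsym C hp
  refine ⟨S, hSC, ?_, ?_⟩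
  · -- the size bound
    set D : ℝ := ∑ u ∈ C, p u * ∑ x ∈ C.filter (fun x => x = u ∨ r x u), p x with hD
    have hDle : D ≤ 4 * B' := by
      have step1 : ∀ u ∈ C, (∑ x ∈ C.filter (fun x => x = u ∨ r x u), p x)
          ≤ p u + ∑ x ∈ C, (if r x u then p x else 0) := by
        intro u hu
        rw [Finset.sum_filter]
        have hpt : ∀ x ∈ C, (if x = u ∨ r x u then p x else 0)
            ≤ (if x = u then p x else 0) + (if r x u then p x else 0) := by
          intro x hx
          by_cases h1 : x = u
          · subst h1
            by_cases h2 : r x x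
            · exact absurd rfl h2.1
            · simp [h2, hp x hx]
          · by_cases h2 : r x u <;> simp [h1, h2, hp x hx]
        calc (∑ x ∈ C, if x = u ∨ r x u then p x else 0)
            ≤ ∑ x ∈ C, ((if x = u then p x else 0) + (if r x u then p x else 0)) :=
              Finset.sum_le_sum hpt
          _ = (∑ x ∈ C, if x = u then p x else 0) + ∑ x ∈ C, (if r x u then p x else 0) :=
              Finset.sum_add_distrib
          _ = p u + ∑ x ∈ C, (if r x u then p x else 0) := by
              rw [Finset.sum_ite_eq' C u p, if_pos hu]
      have step2 : D ≤ ∑ u ∈ C, (p u * p u + ∑ x ∈ C, (if r x u then p u * p x else 0)) := by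
        refine Finset.sum_le_sum (fun u hu => ?_)
        calc p u * ∑ x ∈ C.filter (fun x => x = u ∨ r x u), p x
            ≤ p u * (p u + ∑ x ∈ C, (if r x u then p x else 0)) :=
              mul_le_mul_of_nonneg_left (step1 u hu) (hp u hu)
          _ = p u * p u + ∑ x ∈ C, (if r x u then p u * p x else 0) := by
              rw [mul_add, Finset.mul_sum]
              congr 1
              refine Finset.sum_congr rfl (fun x _ => ?_)
              rw [mul_ite, mul_zero]
      have sq_bound : ∑ u ∈ C, p u * p u ≤ 2 * B' := by
        calc ∑ u ∈ C, p u * p u ≤ ∑ u ∈ C, p u * (2 * B' / W) := by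
              refine Finset.sum_le_sum (fun u hu => ?_)
              refine mul_le_mul_of_nonneg_left ?_ (hp u hu)
              have := hB'max u hu
              rw [le_div_iff₀ hWpos]
              linarith
          _ = (∑ u ∈ C, p u) * (2 * B' / W) := by rw [← Finset.sum_mul]
          _ = 2 * B' := by rw [← hW]; field_simp
      have cross_bound : (∑ u ∈ C, ∑ x ∈ C, (if r x u then p u * p x else 0)) = 2 * B := by
        rw [Finset.sum_comm, hB]
        rw [mul_div_cancel₀ _ (two_ne_zero)]
        refine Finset.sum_congr rfl (fun x _ => Finset.sum_congr rfl (fun u _ => ?_))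
        by_cases h : r x u
        · rw [if_pos h, if_pos, mul_comm]
          exact ⟨h.1, h.2⟩
        · rw [if_neg h, if_neg]
          exact h
      have : ∑ u ∈ C, (p u * p u + ∑ x ∈ C, (if r x u then p u * p x else 0))
          = (∑ u ∈ C, p u * p u) + ∑ u ∈ C, ∑ x ∈ C, (if r x u then p u * p x else 0) :=
        Finset.sum_add_distrib
      rw [this, cross_bound] at step2
      linarith
    have hS0 : (0:ℝ) ≤ (S.card : ℝ) := Nat.cast_nonneg _
    rw [div_le_iff₀ (by linarith : (0:ℝ) < 4 * B')]
    have : (S.card : ℝ) * D ≤ (S.card : ℝ) * (4 * B') :=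
      mul_le_mul_of_nonneg_left hDle hS0
    calc W ^ 2 = (∑ c ∈ C, p c) ^ 2 := by rw [hW]
      _ ≤ (S.card : ℝ) * D := hScard
      _ ≤ (S.card : ℝ) * (4 * B') := this
  · intro c hc c' hc' hne
    by_contra hlt
    exact hSind c hc c' hc' hne ⟨hne, not_le.1 hlt⟩
end

section
/- Let V be a finite set, p : V × V → ℝ a transition matrix with p(u,v) > 0 for all u,v and Σ_v p(u,v) = 1 for every u, and π a stationary distribution for p (i.e. Σ_u π(u)p(u,v) = π(v) for all v). Define the stationary edge measure P(u,v) = π(u)p(u,v) and the entropy rate H(P) = −Σ_{(u,v)} P(u,v) log p(u,v). Let p'((u,v),(u',v')) = p(u,u')p(v,v') be the product transition matrix on V × V, let Q be a shift-invariant probability mass function on (V×V) × (V×V) with coordinate marginals Q_a(u,u') = Σ_{v,v'} Q((u,v),(u',v')) and Q_b(v,v') = Σ_{u,u'} Q((u,v),(u',v')), and define I(Q) = Σ_{z,z'} Q(z,z') log( Q(z'|z)/p'(z,z') ) and H(Q) = −Σ_{z,z'} Q(z,z') log Q(z'|z) with the convention 0·log 0 = 0, where Q(z'|z) = Q(z,z')/Q₁(z)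 for Q₁(z) = Σ_{z'} Q(z,z') > 0. If for some ζ ≥ 0 the marginals satisfy |Q_a(u,v) − P(u,v)| ≤ ζ and |Q_b(u,v) − P(u,v)| ≤ ζ for every (u,v) ∈ V × V, then I(Q) ≥ 2H(P) − H(Q) + 2ζ·Σ_{(u,v)∈V×V} log p(u,v). -/
private lemma sum4_swap_a {V : Type*} [Fintype V] (f : V → V → V → V → ℝ) :
    ∑ u : V, ∑ v : V, ∑ u' : V, ∑ v' : V, f u v u' v'
      = ∑ u : V, ∑ u' : V, ∑ v : V, ∑ v' : V, f u v u' v' :=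
  Finset.sum_congr rfl fun _ _ => Finset.sum_comm

private lemma sum4_swap_b {V : Type*} [Fintype V] (f : V → V → V → V → ℝ) :
    ∑ u : V, ∑ v : V, ∑ u' : V, ∑ v' : V, f u v u' v'
      = ∑ v : V, ∑ v' : V, ∑ u : V, ∑ u' : V, f u v u' v' := by
  rw [Finset.sum_comm]
  refine Finset.sum_congr rfl fun v _ => ?_
  rw [show ∑ u : V, ∑ u' : V, ∑ v' : V, f u v u' v'
      = ∑ u : V, ∑ v' : V, ∑ u' : V, f u v u' v' from
    Finset.sum_congr rfl fun _ _ => Finset.sum_comm, Finset.sum_comm]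

/-- **key LDP inequality `I(Q) ≥ 2H(P) − H(Q) − O(ζ)`.**
Let `V` be a finite set, `p : V × V → ℝ` a transition matrix with strictly positive
entries and rows summing to `1`, and `π` a stationary distribution for `p`.  Define
the stationary edge measure `P (u,v) = π u · p (u,v)` and the entropy rate
`H(P) = −∑ P x · log (p x)`.  Let `p'` be the product transition matrix on `V × V`
and `Q` a shift-invariant probability mass function on `(V×V) × (V×V)` with coordinate
marginals `Qa`, `Qb`, rate function
`I(Q) = ∑ Q (z,z') log ((Q (z,z')/Q₁ z) / p' (z,z'))` and conditional entropy
`H(Q) = −∑ Q (z,z') log (Q (z,z')/Q₁ z)` (convention `0·log 0 = 0`; division by zero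
is `0` in Lean, and the conditional is only relevant where `Q₁ z > 0`).  If for some
`ζ ≥ 0` the marginals satisfy `|Qa x − P x| ≤ ζ` and `|Qb x − P x| ≤ ζ` for every
`x ∈ V × V`, then `I(Q) ≥ 2H(P) − H(Q) + 2ζ ∑_x log (p x)`. -/
theorem stmt_10 {V : Type*} [Fintype V]
    (p : V × V → ℝ) (hp : ∀ x, 0 < p x) (hrow : ∀ u : V, ∑ v : V, p (u, v) = 1)
    (π : V → ℝ) (hπ0 : ∀ v, 0 ≤ π v) (hπ1 : ∑ v, π v = 1)
    (hstat : ∀ v : V, ∑ u : V, π u * p (u, v) = π v)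
    (P : V × V → ℝ) (hP : ∀ u v : V, P (u, v) = π u * p (u, v))
    (HP : ℝ) (hHP : HP = -∑ x : V × V, P x * Real.log (p x))
    (Q : (V × V) × (V × V) → ℝ) (hQ0 : ∀ x, 0 ≤ Q x) (hQ1 : ∑ x, Q x = 1)
    (hshift : ∀ z : V × V, ∑ z' : V × V, Q (z, z') = ∑ z' : V × V, Q (z', z))
    (Qa Qb : V × V → ℝ)
    (hQa : ∀ u u' : V, Qa (u, u') = ∑ v : V, ∑ v' : V, Q ((u, v), (u', v')))
    (hQb : ∀ v v' : V, Qb (v, v') = ∑ u : V, ∑ u' : V, Q ((u, v), (u', v')))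
    (IQ : ℝ)
    (hIQ : IQ = ∑ z : V × V, ∑ z' : V × V,
      Q (z, z') * Real.log ((Q (z, z') / (∑ w : V × V, Q (z, w)))
        / (p (z.1, z'.1) * p (z.2, z'.2))))
    (HQ : ℝ)
    (hHQ : HQ = -∑ z : V × V, ∑ z' : V × V,
      Q (z, z') * Real.log (Q (z, z') / (∑ w : V × V, Q (z, w))))
    (ζ : ℝ) (hζ : 0 ≤ ζ)
    (hQaP : ∀ x : V × V, |Qa x - P x| ≤ ζ)
    (hQbP : ∀ x : V × V, |Qb x - P x| ≤ ζ) :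
    IQ ≥ 2 * HP - HQ + 2 * ζ * ∑ x : V × V, Real.log (p x) := by
  have ple1 : ∀ x : V × V, p x ≤ 1 := by
    rintro ⟨u, v⟩
    have := Finset.single_le_sum (f := fun v' => p (u, v'))
      (fun i _ => (hp (u, i)).le) (Finset.mem_univ v)
    simpa [hrow u] using this
  have hlogp : ∀ x : V × V, Real.log (p x) ≤ 0 :=
    fun x => Real.log_nonpos (hp x).le (ple1 x)
  -- split IQ
  have hSsplit : IQ = -HQ - ∑ z : V × V, ∑ z' : V × V,
      Q (z, z') * Real.log (p (z.1, z'.1) * p (z.2, z'.2)) := by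
    rw [hIQ, hHQ, neg_neg, ← Finset.sum_sub_distrib]
    refine Finset.sum_congr rfl fun z _ => ?_
    rw [← Finset.sum_sub_distrib]
    refine Finset.sum_congr rfl fun z' _ => ?_
    rcases eq_or_lt_of_le (hQ0 (z, z')) with h0 | hpos
    · simp [← h0]
    · have hQ1' : 0 < ∑ w : V × V, Q (z, w) :=
        lt_of_lt_of_le hpos (Finset.single_le_sum (fun i _ => hQ0 (z, i)) (Finset.mem_univ z'))
      have hnum : Q (z, z') / (∑ w : V × V, Q (z, w)) ≠ 0 := by positivity
      have hd1 : p (z.1, z'.1) * p (z.2, z'.2) ≠ 0 := by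
        have := hp (z.1, z'.1); have := hp (z.2, z'.2); positivity
      rw [Real.log_div hnum hd1]
      ring
  -- split the product-log sum into the two marginals
  have hSA : ∑ z : V × V, ∑ z' : V × V,
      Q (z, z') * Real.log (p (z.1, z'.1) * p (z.2, z'.2))
      = (∑ x : V × V, Qa x * Real.log (p x)) + (∑ x : V × V, Qb x * Real.log (p x)) := by
    have hterm : ∀ z z' : V × V, Q (z, z') * Real.log (p (z.1, z'.1) * p (z.2, z'.2))
        = Q (z, z') * Real.log (p (z.1, z'.1)) + Q (z, z') * Real.log (p (z.2, z'.2)) := by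
      intro z z'
      rw [Real.log_mul (hp _).ne' (hp _).ne']; ring
    simp only [hterm, Finset.sum_add_distrib]
    congr 1
    · simp only [Fintype.sum_prod_type]
      rw [sum4_swap_a (fun u v u' v' => Q ((u, v), (u', v')) * Real.log (p (u, u')))]
      refine Finset.sum_congr rfl fun u _ => Finset.sum_congr rfl fun u' _ => ?_
      rw [hQa, Finset.sum_mul]
      exact Finset.sum_congr rfl fun v _ => (Finset.sum_mul _ _ _).symm
    · simp only [Fintype.sum_prod_type]
      rw [sum4_swap_b (fun u v u' v' => Q ((u, v), (u', v')) * Real.log (p (v, v')))]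
      refine Finset.sum_congr rfl fun v _ => Finset.sum_congr rfl fun v' _ => ?_
      rw [hQb, Finset.sum_mul]
      exact Finset.sum_congr rfl fun u _ => (Finset.sum_mul _ _ _).symm
  -- termwise bounds
  have hA : ∑ x : V × V, (P x - Qa x - ζ) * Real.log (p x) ≥ 0 := by
    refine Finset.sum_nonneg fun x _ => ?_
    have h := abs_le.mp (hQaP x)
    nlinarith [hlogp x, h.1]
  have hB : ∑ x : V × V, (P x - Qb x - ζ) * Real.log (p x) ≥ 0 := by
    refine Finset.sum_nonneg fun x _ => ?_
    have h := abs_le.mp (hQbP x)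
    nlinarith [hlogp x, h.1]
  have expand : ∀ g : V × V → ℝ, ∑ x : V × V, (P x - g x - ζ) * Real.log (p x)
      = (∑ x : V × V, P x * Real.log (p x)) - (∑ x : V × V, g x * Real.log (p x))
        - ζ * ∑ x : V × V, Real.log (p x) := by
    intro g
    simp only [sub_mul, Finset.sum_sub_distrib, Finset.mul_sum]
  rw [expand Qa] at hA
  rw [expand Qb] at hB
  rw [hSsplit, hSA]
  rw [hHP]
  linarith
end
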